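/- Fix σ > 0 and a > 0. The function r ↦ TV_a(N(0, σ²), N(r, σ²)) is strictly increasing on (0, ∞). Consequently, for any d ≥ 1 and u₁, u₂ ∈ ℝ^d with ‖u₁ − u₂‖₂ ≤ r, one has TV_a(N(u₁, σ²I_d), N(u₂, σ²I_d)) ≤ TV_a(N(0, σ²), N(r, σ²)). -/

import Mathlib

open MeasureTheory

/-- `TV_a(X, Y) = (1/2) ∫ |f(x) − a·g(x)| dx` for densities `f, g`. -/
noncomputable def TVa {E : Type*} [MeasureSpace E] (a : ℝ) (f g : E → ℝ) : ℝ :=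
  (1 / 2) * ∫ x, |f x - a * g x|

/-- Density of the isotropic Gaussian `N(u, σ²I_d)` on `ℝ^d`. -/
noncomputable def gaussDensity (d : ℕ) (σ : ℝ) (u : EuclideanSpace ℝ (Fin d))
    (x : EuclideanSpace ℝ (Fin d)) : ℝ :=
  (2 * Real.pi * σ ^ 2) ^ (-(d : ℝ) / 2) * Real.exp (-‖x - u‖ ^ 2 / (2 * σ ^ 2))

/-- Density of the one-dimensional Gaussian `N(u, σ²)` on `ℝ`. -/
noncomputable def gauss1 (σ u : ℝ) (x : ℝ) : ℝ :=
  (2 * Real.pi * σ ^ 2) ^ (-(1 : ℝ) / 2) * Real.exp (-(x - u) ^ 2 / (2 * σ ^ 2))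

/-!
For probability densities `f, g` and any measurable `s`,
`TV_a(f, g) ≥ ∫_s (f - a g) - (1 - a) / 2`, with equality when `s = {a g ≤ f}`. For
`f = N(0, σ²)`, `g = N(r, σ²)` and `r > 0` that set is the half-line `(-∞, c_r]` with
`c_r = r / 2 - σ² log a / r`, so `TV_a(r) = Φ(c_r) - a Φ(c_r - r) - (1 - a) / 2` where `Φ` is the
CDF of `N(0, σ²)`. For `r < s`, testing `TV_a(s)` against the same half-line gives
`TV_a(s) ≥ Φ(c_r) - a Φ(c_r - s) - (1 - a) / 2 > TV_a(r)` since `Φ` is strictly increasing; and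
`TV_a(0) = |1 - a| / 2` is the least possible value.

In dimension `d`, a translation and a reflection move the means to `0` and `‖u₁ - u₂‖ e₀`; the
densities then share all factors but the first, and Fubini reduces `TV_a` to dimension one.
-/

open Real Set Finset ProbabilityTheory

lemma TVa_comp {E F : Type*} [MeasureSpace E] [MeasureSpace F] {e : E → F}
    (he : MeasurePreserving e) (he' : MeasurableEmbedding e) (a : ℝ) (f g : F → ℝ) :
    TVa a (fun x => f (e x)) (fun x => g (e x)) = TVa a f g := by
  rw [TVa, TVa, he.integral_comp he' fun y => |f y - a * g y|]

section TVa

variable {E : Type*} [MeasureSpace E] {a : ℝ} {f g : E → ℝ} {s : Set E}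

lemma TVa_sub_setIntegral_eq (hf : Integrable f) (hg : Integrable g) (hf1 : ∫ x, f x = 1)
    (hg1 : ∫ x, g x = 1) (hs : MeasurableSet s) :
    TVa a f g - ((∫ x in s, (f x - a * g x)) - (1 - a) / 2) =
      ((∫ x in s, (|f x - a * g x| - (f x - a * g x))) +
        ∫ x in sᶜ, (|f x - a * g x| + (f x - a * g x))) / 2 := by
  have hh : Integrable (fun x => f x - a * g x) := hf.sub (hg.const_mul a)
  have hmass : ∫ x, (f x - a * g x) = 1 - a := by
    rw [integral_sub hf (hg.const_mul a), integral_const_mul, hf1, hg1, mul_one]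
  rw [integral_sub hh.abs.integrableOn hh.integrableOn, integral_add hh.abs.integrableOn
    hh.integrableOn, TVa, ← integral_add_compl hs hh.abs, ← hmass, ← integral_add_compl hs hh]
  ring

lemma setIntegral_sub_le_TVa (hf : Integrable f) (hg : Integrable g) (hf1 : ∫ x, f x = 1)
    (hg1 : ∫ x, g x = 1) (hs : MeasurableSet s) :
    (∫ x in s, (f x - a * g x)) - (1 - a) / 2 ≤ TVa a f g := by
  have hgap := TVa_sub_setIntegral_eq (a := a) hf hg hf1 hg1 hs
  have h₁ : 0 ≤ ∫ x in s, (|f x - a * g x| - (f x - a * g x)) :=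
    setIntegral_nonneg hs fun x _ => sub_nonneg.2 (le_abs_self _)
  have h₂ : 0 ≤ ∫ x in sᶜ, (|f x - a * g x| + (f x - a * g x)) :=
    setIntegral_nonneg hs.compl fun x _ => by linarith [neg_abs_le (f x - a * g x)]
  linarith

lemma TVa_eq_setIntegral_sub (hf : Integrable f) (hg : Integrable g) (hf1 : ∫ x, f x = 1)
    (hg1 : ∫ x, g x = 1) (hs : MeasurableSet s) (hpos : ∀ x ∈ s, a * g x ≤ f x)
    (hneg : ∀ x ∉ s, f x ≤ a * g x) :
    TVa a f g = (∫ x in s, (f x - a * g x)) - (1 - a) / 2 := by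
  have hgap := TVa_sub_setIntegral_eq (a := a) hf hg hf1 hg1 hs
  have h₁ : ∫ x in s, (|f x - a * g x| - (f x - a * g x)) = 0 :=
    setIntegral_eq_zero_of_forall_eq_zero fun x hx => by
      rw [abs_of_nonneg (sub_nonneg.2 (hpos x hx)), sub_self]
  have h₂ : ∫ x in sᶜ, (|f x - a * g x| + (f x - a * g x)) = 0 :=
    setIntegral_eq_zero_of_forall_eq_zero fun x hx => by
      rw [abs_of_nonpos (sub_nonpos.2 (hneg x hx)), neg_add_cancel]
  linarith

lemma TVa_self (hf1 : ∫ x, f x = 1) (hf0 : ∀ x, 0 ≤ f x) :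
    TVa a f f = |1 - a| / 2 := by
  have h : ∀ x, |f x - a * f x| = |1 - a| * f x := fun x => by
    rw [← one_sub_mul, abs_mul, abs_of_nonneg (hf0 x)]
  simp_rw [TVa, h, integral_const_mul, hf1]
  ring

lemma abs_one_sub_div_two_le_TVa (hf : Integrable f) (hg : Integrable g) (hf1 : ∫ x, f x = 1)
    (hg1 : ∫ x, g x = 1) : |1 - a| / 2 ≤ TVa a f g := by
  have hmass : ∫ x, (f x - a * g x) = 1 - a := by
    rw [integral_sub hf (hg.const_mul a), integral_const_mul, hf1, hg1, mul_one]
  have h := abs_integral_le_integral_abs (f := fun x => f x - a * g x) (μ := volume)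
  rw [hmass] at h
  rw [TVa]
  linarith

end TVa

section OneDim

variable {σ a : ℝ}

lemma gauss1_eq_gaussianPDFReal (σ u : ℝ) :
    gauss1 σ u = gaussianPDFReal u (σ ^ 2).toNNReal := by
  ext x
  rw [gauss1, gaussianPDFReal, coe_toNNReal _ (sq_nonneg σ), neg_div, rpow_neg (by positivity),
    ← sqrt_eq_rpow]

lemma gauss1_pos (hσ : σ ≠ 0) (u x : ℝ) : 0 < gauss1 σ u x := by
  rw [gauss1_eq_gaussianPDFReal]
  exact gaussianPDFReal_pos _ _ _ (toNNReal_pos.2 (by positivity)).ne'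

lemma integrable_gauss1 (σ u : ℝ) : Integrable (gauss1 σ u) := by
  rw [gauss1_eq_gaussianPDFReal]
  exact integrable_gaussianPDFReal _ _

lemma integral_gauss1 (hσ : σ ≠ 0) (u : ℝ) : ∫ x, gauss1 σ u x = 1 := by
  rw [gauss1_eq_gaussianPDFReal]
  exact integral_gaussianPDFReal_eq_one _ (toNNReal_pos.2 (by positivity)).ne'

lemma gauss1_add_right (σ u c x : ℝ) : gauss1 σ (u + c) (x + c) = gauss1 σ u x := by
  rw [gauss1, gauss1, add_sub_add_right_eq_sub]

noncomputable def gauss1CDF (σ t : ℝ) : ℝ := ∫ x in Iic t, gauss1 σ 0 x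

lemma setIntegral_Iic_gauss1 (σ u t : ℝ) :
    ∫ x in Iic t, gauss1 σ u x = gauss1CDF σ (t - u) := by
  have hpre : (· + u) ⁻¹' Iic t = Iic (t - u) := by
    ext x
    simp [le_sub_iff_add_le]
  rw [gauss1CDF, ← hpre, ← (measurePreserving_add_right volume u).setIntegral_preimage_emb
    (measurableEmbedding_addRight u)]
  simp_rw [← gauss1_add_right σ 0 u, zero_add]

lemma gauss1CDF_strictMono (hσ : σ ≠ 0) : StrictMono (gauss1CDF σ) := by
  intro s t hst
  have hint := (integrable_gauss1 σ 0).integrableOn (s := Iic s)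
  rw [← sub_pos, gauss1CDF, gauss1CDF, intervalIntegral.integral_Iic_sub_Iic
    hint (integrable_gauss1 σ 0).integrableOn]
  exact intervalIntegral.intervalIntegral_pos_of_pos_on
    (integrable_gauss1 σ 0).intervalIntegrable (fun x _ => gauss1_pos hσ 0 x) hst

noncomputable def gauss1Crossing (σ a r : ℝ) : ℝ := r / 2 - σ ^ 2 * log a / r

lemma mul_gauss1_le_gauss1_iff (hσ : σ ≠ 0) (ha : 0 < a) {r : ℝ} (hr : 0 < r) (x : ℝ) :
    a * gauss1 σ r x ≤ gauss1 σ 0 x ↔ x ≤ gauss1Crossing σ a r := by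
  have hexp : -(x - r) ^ 2 / (2 * σ ^ 2) + log a =
      -(x - 0) ^ 2 / (2 * σ ^ 2) + r * (x - gauss1Crossing σ a r) / σ ^ 2 := by
    rw [gauss1Crossing]
    field_simp
    ring
  have hratio : a * gauss1 σ r x =
      gauss1 σ 0 x * exp (r * (x - gauss1Crossing σ a r) / σ ^ 2) := by
    rw [gauss1, gauss1, mul_assoc _ (rexp _), ← exp_add, ← hexp, exp_add, exp_log ha]
    ring
  rw [hratio, mul_le_iff_le_one_right (gauss1_pos hσ 0 x), exp_le_one_iff,
    div_le_iff₀ (by positivity), zero_mul, ← mul_zero r, mul_le_mul_iff_right₀ hr, sub_nonpos]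

lemma setIntegral_Iic_gauss1_sub (σ a r c : ℝ) :
    ∫ x in Iic c, (gauss1 σ 0 x - a * gauss1 σ r x) =
      gauss1CDF σ c - a * gauss1CDF σ (c - r) := by
  rw [integral_sub (integrable_gauss1 σ 0).integrableOn
    ((integrable_gauss1 σ r).const_mul a).integrableOn, integral_const_mul,
    setIntegral_Iic_gauss1, setIntegral_Iic_gauss1, sub_zero]

lemma gauss1CDF_sub_le_TVa_gauss1 (hσ : σ ≠ 0) (r c : ℝ) :
    gauss1CDF σ c - a * gauss1CDF σ (c - r) - (1 - a) / 2 ≤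
      TVa a (gauss1 σ 0) (gauss1 σ r) := by
  rw [← setIntegral_Iic_gauss1_sub]
  exact setIntegral_sub_le_TVa (integrable_gauss1 σ 0) (integrable_gauss1 σ r)
    (integral_gauss1 hσ 0) (integral_gauss1 hσ r) measurableSet_Iic

lemma TVa_gauss1_eq (hσ : σ ≠ 0) (ha : 0 < a) {r : ℝ} (hr : 0 < r) :
    TVa a (gauss1 σ 0) (gauss1 σ r) =
      gauss1CDF σ (gauss1Crossing σ a r) - a * gauss1CDF σ (gauss1Crossing σ a r - r) -
        (1 - a) / 2 := by
  have hsign := mul_gauss1_le_gauss1_iff hσ ha hr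
  rw [← setIntegral_Iic_gauss1_sub]
  exact TVa_eq_setIntegral_sub (integrable_gauss1 σ 0) (integrable_gauss1 σ r)
    (integral_gauss1 hσ 0) (integral_gauss1 hσ r) measurableSet_Iic
    (fun x hx => (hsign x).2 hx) (fun x hx => (not_le.1 (mt (hsign x).1 hx)).le)

lemma strictMonoOn_TVa_gauss1 (hσ : σ ≠ 0) (ha : 0 < a) :
    StrictMonoOn (fun r => TVa a (gauss1 σ 0) (gauss1 σ r)) (Ioi 0) := by
  intro r hr s _ hrs
  set c := gauss1Crossing σ a r
  have hCDF : a * gauss1CDF σ (c - s) < a * gauss1CDF σ (c - r) :=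
    mul_lt_mul_of_pos_left (gauss1CDF_strictMono hσ (by linarith)) ha
  calc TVa a (gauss1 σ 0) (gauss1 σ r)
      = gauss1CDF σ c - a * gauss1CDF σ (c - r) - (1 - a) / 2 := TVa_gauss1_eq hσ ha hr
    _ < gauss1CDF σ c - a * gauss1CDF σ (c - s) - (1 - a) / 2 := by linarith
    _ ≤ TVa a (gauss1 σ 0) (gauss1 σ s) := gauss1CDF_sub_le_TVa_gauss1 hσ s c

lemma monotoneOn_TVa_gauss1 (hσ : σ ≠ 0) (ha : 0 < a) :
    MonotoneOn (fun r => TVa a (gauss1 σ 0) (gauss1 σ r)) (Ici 0) := by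
  intro r hr s _ hrs
  rcases (mem_Ici.1 hr).eq_or_lt with rfl | hr
  · dsimp only
    rw [TVa_self (integral_gauss1 hσ 0) fun x => (gauss1_pos hσ 0 x).le]
    exact abs_one_sub_div_two_le_TVa (integrable_gauss1 σ 0) (integrable_gauss1 σ s)
      (integral_gauss1 hσ 0) (integral_gauss1 hσ s)
  · exact (strictMonoOn_TVa_gauss1 hσ ha).monotoneOn hr (hr.trans_le hrs) hrs

end OneDim

lemma integral_mul_prod_erase {ι E : Type*} [Fintype ι] [DecidableEq ι] [MeasureSpace E]
    [SigmaFinite (volume : Measure E)] (i₀ : ι) (h f : E → ℝ) (hf : ∫ x, f x = 1) :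
    ∫ y : ι → E, h (y i₀) * ∏ i ∈ univ.erase i₀, f (y i) = ∫ x, h x := by
  have hupdate : ∀ y : ι → E, h (y i₀) * ∏ i ∈ univ.erase i₀, f (y i) =
      ∏ i, Function.update (fun _ => f) i₀ h i (y i) := fun y => by
    rw [← mul_prod_erase univ _ (mem_univ i₀), Function.update_self]
    congr 1
    exact prod_congr rfl fun i hi => by rw [Function.update_of_ne (ne_of_mem_erase hi)]
  simp_rw [hupdate]
  rw [integral_fintype_prod_volume_eq_prod, ← mul_prod_erase univ _ (mem_univ i₀),
    Function.update_self, prod_eq_one fun i hi => by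
      rw [Function.update_of_ne (ne_of_mem_erase hi), hf], mul_one]

section Euclidean

variable {d : ℕ} {σ a : ℝ}

lemma gaussDensity_eq_prod (d : ℕ) (σ : ℝ) (u z : EuclideanSpace ℝ (Fin d)) :
    gaussDensity d σ u z = ∏ i, gauss1 σ (u i) (z i) := by
  have hconst : (2 * π * σ ^ 2) ^ (-(d : ℝ) / 2) = ((2 * π * σ ^ 2) ^ (-(1 : ℝ) / 2)) ^ d := by
    rw [← rpow_natCast ((2 * π * σ ^ 2) ^ (-(1 : ℝ) / 2)) d, ← rpow_mul (by positivity)]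
    ring_nf
  rw [gaussDensity, hconst, EuclideanSpace.real_norm_sq_eq, ← sum_neg_distrib, sum_div, exp_sum]
  simp only [gauss1, prod_mul_distrib, prod_const, card_univ, Fintype.card_fin, PiLp.sub_apply]

lemma gaussDensity_add_right (d : ℕ) (σ : ℝ) (u c x : EuclideanSpace ℝ (Fin d)) :
    gaussDensity d σ (u + c) (x + c) = gaussDensity d σ u x := by
  rw [gaussDensity, gaussDensity, add_sub_add_right_eq_sub]

lemma gaussDensity_linearIsometryEquiv
    (L : EuclideanSpace ℝ (Fin d) ≃ₗᵢ[ℝ] EuclideanSpace ℝ (Fin d))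
    (u x : EuclideanSpace ℝ (Fin d)) :
    gaussDensity d σ (L u) (L x) = gaussDensity d σ u x := by
  rw [gaussDensity, gaussDensity, ← map_sub, L.norm_map]

lemma gaussDensity_single (σ : ℝ) (i₀ : Fin d) (δ : ℝ) (z : EuclideanSpace ℝ (Fin d)) :
    gaussDensity d σ (EuclideanSpace.single i₀ δ) z =
      gauss1 σ δ (z i₀) * ∏ i ∈ univ.erase i₀, gauss1 σ 0 (z i) := by
  rw [gaussDensity_eq_prod, ← mul_prod_erase univ _ (mem_univ i₀), PiLp.single_eq_same]
  congr 1
  exact prod_congr rfl fun i hi => by rw [PiLp.single_eq_of_ne _ (ne_of_mem_erase hi)]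

lemma TVa_gaussDensity_single (hσ : σ ≠ 0) (i₀ : Fin d) (δ : ℝ) :
    TVa a (gaussDensity d σ 0) (gaussDensity d σ (EuclideanSpace.single i₀ δ)) =
      TVa a (gauss1 σ 0) (gauss1 σ δ) := by
  have hzero : EuclideanSpace.single i₀ (0 : ℝ) = 0 := (PiLp.single_eq_zero_iff 2 i₀).2 rfl
  have hfactor : ∀ y : Fin d → ℝ,
      |gaussDensity d σ 0 (WithLp.toLp 2 y) -
          a * gaussDensity d σ (EuclideanSpace.single i₀ δ) (WithLp.toLp 2 y)| =
        |gauss1 σ 0 (y i₀) - a * gauss1 σ δ (y i₀)| *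
          ∏ i ∈ univ.erase i₀, gauss1 σ 0 (y i) := fun y => by
    rw [← hzero, gaussDensity_single, gaussDensity_single,
      ← mul_assoc, ← sub_mul, abs_mul,
      abs_of_nonneg (prod_nonneg fun i _ => (gauss1_pos hσ 0 _).le)]
  rw [← TVa_comp (PiLp.volume_preserving_toLp (Fin d))
    (MeasurableEquiv.toLp 2 (Fin d → ℝ)).measurableEmbedding, TVa, TVa]
  simp_rw [hfactor]
  rw [integral_mul_prod_erase i₀ (fun t => |gauss1 σ 0 t - a * gauss1 σ δ t|) _
    (integral_gauss1 hσ 0)]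

lemma TVa_gaussDensity_eq (hσ : σ ≠ 0) (hd : 0 < d) (u₁ u₂ : EuclideanSpace ℝ (Fin d)) :
    TVa a (gaussDensity d σ u₁) (gaussDensity d σ u₂) =
      TVa a (gauss1 σ 0) (gauss1 σ ‖u₁ - u₂‖) := by
  set v := u₂ - u₁
  set w := EuclideanSpace.single (⟨0, hd⟩ : Fin d) ‖u₁ - u₂‖
  have hnorm : ‖w‖ = ‖v‖ := by
    rw [PiLp.norm_single, norm_norm, norm_sub_rev]
  set L := (ℝ ∙ (w - v))ᗮ.reflection
  have hLw : L w = v := Submodule.reflection_sub hnorm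
  have htranslate : TVa a (gaussDensity d σ u₁) (gaussDensity d σ u₂) =
      TVa a (gaussDensity d σ 0) (gaussDensity d σ v) := by
    rw [← TVa_comp (measurePreserving_add_right volume u₁) (measurableEmbedding_addRight u₁)]
    congr 1 <;> ext x
    · rw [← gaussDensity_add_right d σ 0 u₁ x, zero_add]
    · rw [← gaussDensity_add_right d σ v u₁ x, sub_add_cancel]
  have hrotate : TVa a (gaussDensity d σ 0) (gaussDensity d σ v) =
      TVa a (gaussDensity d σ 0) (gaussDensity d σ w) := by
    rw [← TVa_comp L.measurePreserving L.toHomeomorph.measurableEmbedding]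
    congr 1 <;> ext x
    · rw [← L.map_zero, gaussDensity_linearIsometryEquiv, L.map_zero]
    · rw [← hLw, gaussDensity_linearIsometryEquiv]
  rw [htranslate, hrotate, TVa_gaussDensity_single hσ]

end Euclidean

/-- `r ↦ TV_a(N(0, σ²), N(r, σ²))` is strictly increasing on `(0, ∞)`; consequently
for any `d ≥ 1` and means at Euclidean distance at most `r`, the `TV_a` divergence between
the `d`-dimensional isotropic Gaussians is at most `TV_a(N(0, σ²), N(r, σ²))`. -/
theorem tva_gauss_strictMono_and_le (σ a : ℝ) (hσ : 0 < σ) (ha : 0 < a) :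
    StrictMonoOn (fun r : ℝ => TVa a (gauss1 σ 0) (gauss1 σ r)) (Set.Ioi 0) ∧
    ∀ (d : ℕ), 1 ≤ d → ∀ (r : ℝ) (u₁ u₂ : EuclideanSpace ℝ (Fin d)), ‖u₁ - u₂‖ ≤ r →
      TVa a (gaussDensity d σ u₁) (gaussDensity d σ u₂)
        ≤ TVa a (gauss1 σ 0) (gauss1 σ r) := by
  refine ⟨strictMonoOn_TVa_gauss1 hσ.ne' ha, fun d hd r u₁ u₂ hr => ?_⟩
  rw [TVa_gaussDensity_eq hσ.ne' hd]
  exact monotoneOn_TVa_gauss1 hσ.ne' ha (norm_nonneg _) ((norm_nonneg _).trans hr) hr
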